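/- For independent positive integer-valued random variables σ₁,...,σ_J with finite means, letting σ_max = max_j σ_j and σ_min = min_j σ_j, we have E[σ_max/σ_min] ≥ E[σ_max]/min_j E[σ_j]. -/

import Mathlib

/-!
Let `j₀` minimise `E[σ_j]`, put `S = σ_{j₀}` and let `T` be the maximum of the other `σ_j`, so
that `σ_max = max S T` with `T` independent of `S`. For fixed `t`, `s ↦ max s t / s` is antitone
while `s ↦ s` is increasing, so Chebyshev's integral inequality gives
`E[max S t] ≤ E[max S t / S] * E[S]`. Integrating over the independent `T` yields
`E[σ_max] ≤ E[σ_max / S] * E[S] ≤ E[σ_max / σ_min] * min_j E[σ_j]`.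
-/

open MeasureTheory ProbabilityTheory Finset

theorem Finset.sup'_eq_max_sup_erase {ι α : Type*} [LinearOrder α] [OrderBot α] [DecidableEq ι]
    {s : Finset ι} (hs : s.Nonempty) (f : ι → α) {i : ι} (hi : i ∈ s) :
    s.sup' hs f = max (f i) ((s.erase i).sup f) := by
  conv_lhs => rw [sup'_eq_sup, ← insert_erase hi, sup_insert]

theorem Finset.measurable_fun_sup {δ ι α : Type*} [MeasurableSpace δ] [MeasurableSpace α]
    [SemilatticeSup α] [OrderBot α] [MeasurableSup₂ α] (s : Finset ι) {f : ι → δ → α}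
    (hf : ∀ i ∈ s, Measurable (f i)) : Measurable fun x => s.sup fun i => f i x := by
  simpa only [← Finset.sup_apply] using
    Finset.sup_induction (p := Measurable) measurable_const (fun _ h _ h' => h.sup h') hf

theorem MeasureTheory.Integrable.finset_sup' {Ω ι E : Type*} [MeasurableSpace Ω]
    {μ : Measure Ω} [NormedAddCommGroup E] [Lattice E] [HasSolidNorm E] [IsOrderedAddMonoid E]
    {s : Finset ι} (hs : s.Nonempty) {f : ι → Ω → E} (hf : ∀ i ∈ s, Integrable (f i) μ) :
    Integrable (fun ω => s.sup' hs fun i => f i ω) μ := by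
  simpa only [← Finset.sup'_apply] using
    Finset.sup'_induction hs _ (p := (Integrable · μ)) (fun _ h _ h' => h.sup h') hf

theorem antitoneOn_max_div_self (t : ℝ) :
    AntitoneOn (fun x : ℝ => max x t / x) (Set.Ioi 0) := by
  intro a (ha : 0 < a) b (hb : 0 < b) hab
  simp only
  rw [div_le_div_iff₀ hb ha]
  rcases le_total t a with hta | hat
  · rw [max_eq_left (hta.trans hab), max_eq_left hta, mul_comm]
  · rw [max_eq_right hat]
    rcases le_total t b with htb | hbt
    · rw [max_eq_left htb]; nlinarith
    · rw [max_eq_right hbt]; nlinarith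

theorem integral_mul_le_integral_mul_integral_of_antivaryOn {β : Type*} [MeasurableSpace β]
    (ρ : Measure β) [IsProbabilityMeasure ρ] {f g : β → ℝ} {s : Set β} (hfg : AntivaryOn f g s)
    (hs : ∀ᵐ x ∂ρ, x ∈ s) (hf : Integrable f ρ) (hg : Integrable g ρ)
    (hfg_int : Integrable (fun x => f x * g x) ρ) :
    ∫ x, f x * g x ∂ρ ≤ (∫ x, f x ∂ρ) * ∫ x, g x ∂ρ := by
  have hs₂ : ∀ᵐ z ∂ρ.prod ρ, z.1 ∈ s ∧ z.2 ∈ s :=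
    (Measure.quasiMeasurePreserving_fst.ae hs).and (Measure.quasiMeasurePreserving_snd.ae hs)
  have hcov : ∫ z, (f z.1 - f z.2) * (g z.1 - g z.2) ∂ρ.prod ρ ≤ 0 :=
    integral_nonpos_of_ae (hs₂.mono fun z hz => hfg.sub_mul_sub_nonpos hz.2 hz.1)
  have hA := hfg_int.comp_fst ρ
  have hB := hf.mul_prod hg
  have hC := hg.mul_prod hf
  have hD := hfg_int.comp_snd ρ
  have hexpand : ∫ z, (f z.1 - f z.2) * (g z.1 - g z.2) ∂ρ.prod ρ
      = 2 * ∫ x, f x * g x ∂ρ - 2 * ((∫ x, f x ∂ρ) * ∫ x, g x ∂ρ) := by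
    have e₁ := integral_sub (hA.sub hB) (hC.sub hD)
    have e₂ := integral_sub hA hB
    have e₃ := integral_sub hC hD
    simp only [Pi.sub_apply] at e₁ e₂ e₃
    calc ∫ z, (f z.1 - f z.2) * (g z.1 - g z.2) ∂ρ.prod ρ
        = ∫ z, (f z.1 * g z.1 - f z.1 * g z.2) - (g z.1 * f z.2 - f z.2 * g z.2) ∂ρ.prod ρ := by
          congr 1; funext z; ring
      _ = _ := by
          rw [e₁, e₂, e₃, integral_prod_mul, integral_prod_mul,
            integral_fun_fst (fun x => f x * g x), integral_fun_snd (fun x => f x * g x)]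
          simp only [probReal_univ, one_smul]
          ring
  linarith

theorem ProbabilityTheory.IndepFun.integral_mul_le_of_antivaryOn {Ω α β : Type*}
    [MeasurableSpace Ω] [MeasurableSpace α] [MeasurableSpace β] {μ : Measure Ω}
    [IsProbabilityMeasure μ] {X : Ω → α} {Y : Ω → β} (hXY : IndepFun X Y μ) (hX : Measurable X)
    (hY : Measurable Y) {F : α → β → ℝ} {g : β → ℝ} {s : Set β}
    (hF : Measurable (Function.uncurry F)) (hg : Measurable g) (hs : MeasurableSet s)
    (hFg : ∀ x, AntivaryOn (F x) g s) (hYs : ∀ᵐ ω ∂μ, Y ω ∈ s)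
    (hF_int : Integrable (fun ω => F (X ω) (Y ω)) μ) (hg_int : Integrable (fun ω => g (Y ω)) μ)
    (hFg_int : Integrable (fun ω => F (X ω) (Y ω) * g (Y ω)) μ) :
    ∫ ω, F (X ω) (Y ω) * g (Y ω) ∂μ ≤ (∫ ω, F (X ω) (Y ω) ∂μ) * ∫ ω, g (Y ω) ∂μ := by
  set ν := μ.map X
  set ρ := μ.map Y
  have : IsProbabilityMeasure ρ := Measure.isProbabilityMeasure_map hY.aemeasurable
  have hXY_meas : Measurable fun ω => (X ω, Y ω) := hX.prodMk hY
  have hlaw : μ.map (fun ω => (X ω, Y ω)) = ν.prod ρ :=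
    (indepFun_iff_map_prod_eq_prod_map_map hX.aemeasurable hY.aemeasurable).1 hXY
  have hFg_meas : Measurable fun z : α × β => F z.1 z.2 * g z.2 :=
    hF.mul (hg.comp measurable_snd)
  have transfer {Φ : α × β → ℝ} (hΦ : Measurable Φ) :
      ∫ z, Φ z ∂ν.prod ρ = ∫ ω, Φ (X ω, Y ω) ∂μ := by
    rw [← hlaw, integral_map hXY_meas.aemeasurable hΦ.aestronglyMeasurable]
  have transfer_int {Φ : α × β → ℝ} (hΦ : Measurable Φ)
      (h : Integrable (fun ω => Φ (X ω, Y ω)) μ) : Integrable Φ (ν.prod ρ) := by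
    rwa [← hlaw, integrable_map_measure hΦ.aestronglyMeasurable hXY_meas.aemeasurable]
  have hF' := transfer_int hF hF_int
  have hFg' := transfer_int hFg_meas hFg_int
  have hρs : ∀ᵐ y ∂ρ, y ∈ s := (ae_map_iff hY.aemeasurable hs).2 hYs
  have hρg : Integrable g ρ :=
    (integrable_map_measure hg.aestronglyMeasurable hY.aemeasurable).2 hg_int
  calc ∫ ω, F (X ω) (Y ω) * g (Y ω) ∂μ
      = ∫ x, ∫ y, F x y * g y ∂ρ ∂ν := by rw [← transfer hFg_meas, integral_prod _ hFg']
    _ ≤ ∫ x, (∫ y, F x y ∂ρ) * ∫ y, g y ∂ρ ∂ν := by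
      refine integral_mono_ae hFg'.integral_prod_left (hF'.integral_prod_left.mul_const _) ?_
      filter_upwards [hF'.prod_right_ae, hFg'.prod_right_ae] with x hFx hFgx
      exact integral_mul_le_integral_mul_integral_of_antivaryOn ρ (hFg x) hρs hFx hρg hFgx
    _ = (∫ ω, F (X ω) (Y ω) ∂μ) * ∫ ω, g (Y ω) ∂μ := by
      rw [integral_mul_const, integral_map hY.aemeasurable hg.aestronglyMeasurable]
      congr 1
      exact (integral_prod _ hF').symm.trans (transfer hF)

theorem ProbabilityTheory.iIndepFun.indepFun_finset_sup_of_notMem {Ω ι β : Type*}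
    [MeasurableSpace Ω] {μ : Measure Ω} [IsProbabilityMeasure μ] [MeasurableSpace β]
    [SemilatticeSup β] [OrderBot β] [MeasurableSup₂ β] {f : ι → Ω → β} (hf : iIndepFun f μ)
    (hmeas : ∀ i, Measurable (f i)) {s : Finset ι} {i : ι} (hi : i ∉ s) :
    IndepFun (fun ω => s.sup fun j => f j ω) (f i) μ := by
  classical
  have hsup : Measurable fun v : s → β => univ.sup fun j => v j :=
    Finset.measurable_fun_sup _ fun j _ => measurable_pi_apply j
  have := (hf.indepFun_finset s {i} (disjoint_singleton_right.2 hi) hmeas).comp hsup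
    (measurable_pi_apply ⟨i, mem_singleton_self i⟩)
  convert this using 1
  · funext ω
    exact (sup_attach s _).symm
  · rfl

theorem ProbabilityTheory.IndepFun.integral_max_le_integral_max_div_mul_integral {Ω : Type*}
    [MeasurableSpace Ω] {μ : Measure Ω} [IsProbabilityMeasure μ] {S T : Ω → ℕ}
    (hTS : IndepFun T S μ) (hT : Measurable T) (hS : Measurable S)
    (hS_pos : ∀ᵐ ω ∂μ, 0 < S ω) (hS_int : Integrable (fun ω => (S ω : ℝ)) μ)
    (hmax_int : Integrable (fun ω => max (S ω : ℝ) (T ω)) μ)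
    (hratio_int : Integrable (fun ω => max (S ω : ℝ) (T ω) / S ω) μ) :
    ∫ ω, max (S ω : ℝ) (T ω) ∂μ ≤
      (∫ ω, max (S ω : ℝ) (T ω) / S ω ∂μ) * ∫ ω, (S ω : ℝ) ∂μ := by
  have hcancel :
      (fun ω => max (S ω : ℝ) (T ω) / S ω * S ω) =ᵐ[μ] fun ω => max (S ω : ℝ) (T ω) :=
    hS_pos.mono fun ω hω => div_mul_cancel₀ _ (Nat.cast_ne_zero.2 hω.ne')
  rw [← integral_congr_ae hcancel]
  exact hTS.integral_mul_le_of_antivaryOn (F := fun t s : ℕ => max (s : ℝ) t / s)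
    (g := fun s : ℕ => (s : ℝ)) hT hS
    (measurable_of_countable _) (measurable_of_countable _) (.of_discrete)
    (fun t => (antivaryOn_id_iff.2 (antitoneOn_max_div_self t)).comp_right Nat.cast)
    (hS_pos.mono fun ω hω => by simpa using hω) hratio_int hS_int
    (hmax_int.congr hcancel.symm)

/-- For independent positive integer-valued random variables σ₁,...,σ_J with finite means,
E[σ_max/σ_min] ≥ E[σ_max]/min_j E[σ_j]. -/
theorem stmt_0 {Ω : Type*} [MeasurableSpace Ω] (μ : Measure Ω) [IsProbabilityMeasure μ]
    (J : ℕ) [NeZero J] (σ : Fin J → Ω → ℕ)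
    (hpos : ∀ j ω, 1 ≤ σ j ω)
    (hmeas : ∀ j, Measurable (σ j))
    (hindep : iIndepFun σ μ)
    (hint : ∀ j, Integrable (fun ω => (σ j ω : ℝ)) μ)
    (hratio : Integrable (fun ω =>
      ((Finset.univ.sup' Finset.univ_nonempty fun j => σ j ω : ℕ) : ℝ) /
      ((Finset.univ.inf' Finset.univ_nonempty fun j => σ j ω : ℕ) : ℝ)) μ) :
    (∫ ω, ((Finset.univ.sup' Finset.univ_nonempty fun j => σ j ω : ℕ) : ℝ) ∂μ) /
      (Finset.univ.inf' Finset.univ_nonempty fun j => ∫ ω, (σ j ω : ℝ) ∂μ) ≤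
    ∫ ω, ((Finset.univ.sup' Finset.univ_nonempty fun j => σ j ω : ℕ) : ℝ) /
      ((Finset.univ.inf' Finset.univ_nonempty fun j => σ j ω : ℕ) : ℝ) ∂μ := by
  obtain ⟨j₀, -, hj₀⟩ := exists_mem_eq_inf' univ_nonempty fun j => ∫ ω, (σ j ω : ℝ) ∂μ
  set S := σ j₀
  set T : Ω → ℕ := fun ω => (univ.erase j₀).sup fun j => σ j ω
  have hM_int := Integrable.finset_sup' univ_nonempty fun j _ => hint j
  have hM : ∀ ω, ((univ.sup' univ_nonempty fun j => σ j ω : ℕ) : ℝ) = max (S ω : ℝ) (T ω) :=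
    fun ω => by rw [sup'_eq_max_sup_erase _ _ (mem_univ j₀), Nat.cast_max]
  simp only [← Nat.cast_finsetSup', hM] at hratio hM_int ⊢
  have hS_pos : ∀ ω, (0 : ℝ) < S ω := fun ω => Nat.cast_pos.2 (hpos j₀ ω)
  have hratio_le : ∀ ω, max (S ω : ℝ) (T ω) / S ω ≤
      max (S ω : ℝ) (T ω) / (univ.inf' univ_nonempty fun j => σ j ω : ℕ) := fun ω =>
    div_le_div_of_nonneg_left (by positivity) (Nat.cast_pos.2 (le_inf' _ _ fun j _ => hpos j ω))
      (Nat.cast_le.2 (inf'_le _ (mem_univ j₀)))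
  have hT : Measurable T := measurable_fun_sup _ fun j _ => hmeas j
  have hratio_int : Integrable (fun ω => max (S ω : ℝ) (T ω) / S ω) μ :=
    hratio.mono' (Measurable.aestronglyMeasurable (by have := hmeas j₀; fun_prop))
      (.of_forall fun ω => (Real.norm_of_nonneg (by positivity)).trans_le (hratio_le ω))
  have hTS := hindep.indepFun_finset_sup_of_notMem hmeas (notMem_erase j₀ univ)
  rw [hj₀]
  refine div_le_of_le_mul₀ (integral_nonneg fun ω => (hS_pos ω).le)
    (integral_nonneg fun ω => by positivity) ?_
  calc ∫ ω, max (S ω : ℝ) (T ω) ∂μ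
      ≤ (∫ ω, max (S ω : ℝ) (T ω) / S ω ∂μ) * ∫ ω, (S ω : ℝ) ∂μ :=
        hTS.integral_max_le_integral_max_div_mul_integral hT (hmeas j₀)
          (.of_forall fun ω => hpos j₀ ω) (hint j₀) hM_int hratio_int
    _ ≤ _ := mul_le_mul_of_nonneg_right (integral_mono hratio_int hratio hratio_le)
        (integral_nonneg fun ω => (hS_pos ω).le)
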